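/- arXiv:1402.5712 — 2 statements merged into one kernel-verified Lean document; each statement's English description precedes it below -/
import Mathlib

section
/- For β strictly greater than β_c, the invariance relation Rμ = e^β μ has no nonzero solution among finite Borel measures μ on Z. -/
/-!
Write `N n z = |h⁻ⁿ(z)|`. On a compact Hausdorff space a local homeomorphism is a covering map, so
each `N n` is locally constant, hence continuous, and `N (n + 1) z = ∑_{h w = z} N n w`. Testing
`Rμ = e^β μ` against `N n` gives `∫ N n dμ = e^{nβ} μ(Z)`, so a nonzero `μ` forces
`e^{nβ} ≤ max N n` for every `n`, i.e. `β ≤ β_c`.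
-/

open MeasureTheory Filter

/-- The critical inverse temperature `β_c = limsup n⁻¹ ln (max_z |h⁻ⁿ(z)|)`. -/
noncomputable def betaC {Z : Type*} (h : Z → Z) : ℝ :=
  Filter.limsup
    (fun n : ℕ => (n : ℝ)⁻¹ *
      Real.log (⨆ z : Z, (Nat.card ((h^[n]) ⁻¹' {z}) : ℝ))) Filter.atTop

theorem IsCoveringMap.isLocallyConstant_natCard_fiber {E X : Type*} [TopologicalSpace E]
    [TopologicalSpace X] {f : E → X} (hf : IsCoveringMap f) :
    IsLocallyConstant fun x => Nat.card (f ⁻¹' {x}) := by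
  refine (IsLocallyConstant.iff_eventually_eq _).mpr fun x => ?_
  obtain ⟨hI, U, hxU, hU, hfU, H, hH⟩ := hf x
  filter_upwards [hU.mem_nhds hxU] with y hy
  exact Nat.card_congr (IsEvenlyCovered.fiberHomeomorph ⟨hI, U, hy, hU, hfU, H, hH⟩).toEquiv.symm

theorem IsCoveringMap.finite_preimage_singleton {E X : Type*} [TopologicalSpace E]
    [TopologicalSpace X] [CompactSpace E] [T1Space X] {f : E → X} (hf : IsCoveringMap f) (x : X) :
    (f ⁻¹' {x}).Finite :=
  (isClosed_singleton.preimage hf.continuous).isCompact.finite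
    (isDiscrete_iff_discreteTopology.mpr (hf x).discreteTopology_fiber)

theorem IsLocalHomeomorph.iterate {X : Type*} [TopologicalSpace X] {f : X → X}
    (hf : IsLocalHomeomorph f) : ∀ n, IsLocalHomeomorph f^[n]
  | 0 => (Homeomorph.refl X).isLocalHomeomorph
  | n + 1 => (hf.iterate n).comp hf

theorem Nat.card_preimage_eq_sum {X Y : Type*} {f : X → Y} {s : Set Y} [Fintype s]
    (hf : ∀ y ∈ s, (f ⁻¹' {y}).Finite) :
    Nat.card (f ⁻¹' s) = ∑ y : s, Nat.card (f ⁻¹' {(y : Y)}) := by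
  have : ∀ y : s, Finite (f ⁻¹' {(y : Y)}) := fun y => hf y y.2
  rw [← Nat.card_sigma]
  exact Nat.card_congr
    { toFun x := ⟨⟨f x, x.2⟩, ⟨x, rfl⟩⟩
      invFun p := ⟨p.2, by rw [Set.mem_preimage, show f p.2 = p.1 from p.2.2]; exact p.1.2⟩
      left_inv _ := rfl
      right_inv := by
        rintro ⟨⟨y, hy⟩, ⟨x, hx⟩⟩
        obtain rfl : f x = y := hx
        rfl }

theorem Nat.card_preimage_iterate_succ {X : Type*} {f : X → X} {n : ℕ}
    (hfn : ∀ x, (f^[n] ⁻¹' {x}).Finite) (x : X) [Fintype (f ⁻¹' {x})] :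
    Nat.card (f^[n + 1] ⁻¹' {x}) = ∑ y : f ⁻¹' {x}, Nat.card (f^[n] ⁻¹' {(y : X)}) := by
  rw [Function.iterate_succ', Set.preimage_comp]
  exact Nat.card_preimage_eq_sum fun y _ => hfn y

theorem Nat.card_preimage_iterate_le_pow {X : Type*} {f : X → X}
    (hfin : ∀ n x, (f^[n] ⁻¹' {x}).Finite) {M : ℕ} (hM : ∀ x, Nat.card (f ⁻¹' {x}) ≤ M) :
    ∀ n x, Nat.card (f^[n] ⁻¹' {x}) ≤ M ^ n
  | 0, x => by simp
  | n + 1, x => by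
    have : Fintype (f ⁻¹' {x}) := (hfin 1 x).fintype
    calc Nat.card (f^[n + 1] ⁻¹' {x})
        = ∑ y : f ⁻¹' {x}, Nat.card (f^[n] ⁻¹' {(y : X)}) :=
          Nat.card_preimage_iterate_succ (hfin n) x
      _ ≤ ∑ _y : f ⁻¹' {x}, M ^ n :=
          Finset.sum_le_sum fun y _ => Nat.card_preimage_iterate_le_pow hfin hM n y
      _ = Nat.card (f ⁻¹' {x}) * M ^ n := by simp [Nat.card_eq_fintype_card]
      _ ≤ M ^ (n + 1) := by rw [pow_succ']; exact Nat.mul_le_mul_right _ (hM x)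

/-- `hup` keeps the sequence bounded above; otherwise its `limsup` on `ℝ` is a junk value. -/
theorem Real.log_le_limsup_inv_mul_log {S : ℕ → ℝ} {a b : ℝ} (ha : 0 < a)
    (hlow : ∀ n, a ^ n ≤ S n) (hup : ∀ n, S n ≤ b ^ n) :
    Real.log a ≤ limsup (fun n : ℕ => (n : ℝ)⁻¹ * Real.log (S n)) atTop := by
  have hS : ∀ n, 0 < S n := fun n => (pow_pos ha n).trans_le (hlow n)
  have hb : 0 < b := by simpa using (hS 1).trans_le (hup 1)
  refine le_limsup_of_frequently_le (Eventually.frequently ?_) ?_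
  · filter_upwards [eventually_ge_atTop 1] with n hn
    rw [le_inv_mul_iff₀ (by exact_mod_cast hn), ← Real.log_pow]
    exact Real.log_le_log (pow_pos ha n) (hlow n)
  · refine isBoundedUnder_of_eventually_le (a := Real.log b) ?_
    filter_upwards [eventually_ge_atTop 1] with n hn
    rw [inv_mul_le_iff₀ (by exact_mod_cast hn), ← Real.log_pow]
    exact Real.log_le_log (hS n) (hup n)

section Dynamics

variable {Z : Type*} [TopologicalSpace Z] [CompactSpace Z] [T2Space Z] {h : Z → Z}

theorem IsLocalHomeomorph.isCoveringMap_iterate (hloc : IsLocalHomeomorph h) (n : ℕ) :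
    IsCoveringMap h^[n] :=
  isLocalHomeomorph_iff_isCoveringMap.mp (hloc.iterate n)

theorem IsLocalHomeomorph.continuous_natCard_preimage_iterate (hloc : IsLocalHomeomorph h)
    (n : ℕ) : Continuous fun z => (Nat.card (h^[n] ⁻¹' {z}) : ℝ) :=
  ((hloc.isCoveringMap_iterate n).isLocallyConstant_natCard_fiber.comp ((↑) : ℕ → ℝ)).continuous

theorem IsLocalHomeomorph.exists_natCard_preimage_iterate_le_pow (hloc : IsLocalHomeomorph h) :
    ∃ M : ℕ, ∀ n z, Nat.card (h^[n] ⁻¹' {z}) ≤ M ^ n := by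
  obtain ⟨M, hM⟩ :=
    (hloc.isCoveringMap_iterate 1).isLocallyConstant_natCard_fiber.range_finite.bddAbove
  exact ⟨M, Nat.card_preimage_iterate_le_pow
    (fun n => (hloc.isCoveringMap_iterate n).finite_preimage_singleton) fun z => hM ⟨z, rfl⟩⟩

variable [MeasurableSpace Z] {μ : Measure Z} {c : ℝ}

theorem integral_natCard_preimage_iterate (hloc : IsLocalHomeomorph h)
    (heig : ∀ a : C(Z, ℝ), ∫ z, (∑' w : h ⁻¹' {z}, a w) ∂μ = c * ∫ z, a z ∂μ) :
    ∀ n, ∫ z, (Nat.card (h^[n] ⁻¹' {z}) : ℝ) ∂μ = c ^ n * μ.real Set.univ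
  | 0 => by simp
  | n + 1 => by
    have hrec (z : Z) : (Nat.card (h^[n + 1] ⁻¹' {z}) : ℝ) =
        ∑' w : h ⁻¹' {z}, (Nat.card (h^[n] ⁻¹' {(w : Z)}) : ℝ) := by
      have : Fintype (h ⁻¹' {z}) :=
        ((hloc.isCoveringMap_iterate 1).finite_preimage_singleton z).fintype
      rw [tsum_fintype, Nat.card_preimage_iterate_succ
        (hloc.isCoveringMap_iterate n).finite_preimage_singleton, Nat.cast_sum]
    rw [integral_congr_ae (Eventually.of_forall hrec)]
    refine (heig ⟨_, hloc.continuous_natCard_preimage_iterate n⟩).trans ?_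
    simp only [ContinuousMap.coe_mk, integral_natCard_preimage_iterate hloc heig n]
    ring

theorem pow_le_iSup_natCard_preimage_iterate [IsFiniteMeasure μ] [NeZero μ]
    (hloc : IsLocalHomeomorph h)
    (heig : ∀ a : C(Z, ℝ), ∫ z, (∑' w : h ⁻¹' {z}, a w) ∂μ = c * ∫ z, a z ∂μ) (n : ℕ) :
    c ^ n ≤ ⨆ z, (Nat.card (h^[n] ⁻¹' {z}) : ℝ) := by
  obtain ⟨M, hM⟩ := hloc.exists_natCard_preimage_iterate_le_pow
  have hbdd : BddAbove (Set.range fun z => (Nat.card (h^[n] ⁻¹' {z}) : ℝ)) :=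
    ⟨M ^ n, Set.forall_mem_range.2 fun z => by exact_mod_cast hM n z⟩
  refine le_of_mul_le_mul_right ?_ (measureReal_univ_pos (μ := μ))
  calc c ^ n * μ.real Set.univ = ∫ z, (Nat.card (h^[n] ⁻¹' {z}) : ℝ) ∂μ :=
        (integral_natCard_preimage_iterate hloc heig n).symm
    _ ≤ ∫ _z, ⨆ z, (Nat.card (h^[n] ⁻¹' {z}) : ℝ) ∂μ :=
        integral_mono_of_nonneg (Eventually.of_forall fun z => by positivity)
          (integrable_const _) (Eventually.of_forall fun z => le_ciSup hbdd z)
    _ = (⨆ z, (Nat.card (h^[n] ⁻¹' {z}) : ℝ)) * μ.real Set.univ := by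
        rw [integral_const, smul_eq_mul, mul_comm]

end Dynamics

theorem stmt7_general {Z : Type*} [TopologicalSpace Z] [CompactSpace Z] [T2Space Z]
    [MeasurableSpace Z]
    (h : Z → Z) (hloc : IsLocalHomeomorph h)
    (R : Measure Z → Measure Z)
    (hR : ∀ ν : Measure Z, IsFiniteMeasure ν → ∀ a : C(Z, ℝ),
      ∫ z, a z ∂(R ν) = ∫ z, (∑' w : (h ⁻¹' {z}), a (w : Z)) ∂ν)
    {β : ℝ} (hβ : betaC h < β)
    (μ : Measure Z) [IsFiniteMeasure μ]
    (hinv : R μ = ENNReal.ofReal (Real.exp β) • μ) :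
    μ = 0 := by
  by_contra hμ
  have : NeZero μ := ⟨hμ⟩
  have heig (a : C(Z, ℝ)) :
      ∫ z, (∑' w : h ⁻¹' {z}, a w) ∂μ = Real.exp β * ∫ z, a z ∂μ := by
    rw [← hR μ inferInstance a, hinv, integral_smul_measure,
      ENNReal.toReal_ofReal (Real.exp_pos β).le, smul_eq_mul]
  obtain ⟨M, hM⟩ := hloc.exists_natCard_preimage_iterate_le_pow
  have hup (n : ℕ) : ⨆ z, (Nat.card (h^[n] ⁻¹' {z}) : ℝ) ≤ (M : ℝ) ^ n :=
    Real.iSup_le (fun z => by exact_mod_cast hM n z) (by positivity)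
  have hβ_le := Real.log_le_limsup_inv_mul_log (Real.exp_pos β)
    (pow_le_iSup_natCard_preimage_iterate hloc heig) hup
  rw [Real.log_exp] at hβ_le
  exact hβ.not_ge hβ_le

/-- For `β > β_c` the invariance relation `Rμ = e^β μ` has no nonzero solution
among finite Borel measures. -/
theorem stmt7 {Z : Type*} [TopologicalSpace Z] [CompactSpace Z] [T2Space Z] [Nonempty Z]
    [MeasurableSpace Z] [BorelSpace Z]
    (h : Z → Z) (hloc : IsLocalHomeomorph h) (hsurj : Function.Surjective h)
    (R : Measure Z → Measure Z)
    (hRfin : ∀ ν : Measure Z, IsFiniteMeasure ν → IsFiniteMeasure (R ν))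
    (hR : ∀ ν : Measure Z, IsFiniteMeasure ν → ∀ a : C(Z, ℝ),
      ∫ z, a z ∂(R ν) = ∫ z, (∑' w : (h ⁻¹' {z}), a (w : Z)) ∂ν)
    {β : ℝ} (hβ : betaC h < β)
    (μ : Measure Z) [IsFiniteMeasure μ]
    (hinv : R μ = ENNReal.ofReal (Real.exp β) • μ) :
    μ = 0 :=
  stmt7_general h hloc R hR hβ μ hinv
end

section
/- Let E be a finite directed graph with at least one cycle. Then ρ(A)^N ≤ max_{z∈E^∞} |σ^{-N}(z)| for every N ≥ 1, where A is the vertex matrix, σ the shift on E^∞, and ρ(A) the spectral radius. -/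
/-- The one-sided infinite path space of a directed graph. -/
def PathSpace {V E1 : Type*} (r s : E1 → V) : Type _ :=
  {z : ℕ → E1 // ∀ i, s (z i) = r (z (i + 1))}

/-- The one-sided shift on the infinite path space. -/
def shiftMap {V E1 : Type*} (r s : E1 → V) (z : PathSpace r s) : PathSpace r s :=
  ⟨fun i => z.1 (i + 1), fun i => z.2 (i + 1)⟩

/-- The vertex matrix of a finite graph: `A v w` is the number of edges from `v` to `w`. -/
noncomputable def vertexMatrix {V E1 : Type*} [Fintype V] [Fintype E1]
    (r s : E1 → V) : Matrix V V ℕ :=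
  fun v w => Nat.card {e : E1 // r e = v ∧ s e = w}

/-- The spectral radius of a real matrix. -/
noncomputable def specRad {V : Type*} [Fintype V] [DecidableEq V] (A : Matrix V V ℝ) : ℝ :=
  (spectralRadius ℂ (A.map Complex.ofReal)).toReal

set_option linter.unusedSectionVars false

section Comb
variable {V E1 : Type*} [Fintype V] [Fintype E1] [DecidableEq V] (r s : E1 → V)

lemma vm_pos {u w : V} (h : 0 < vertexMatrix r s u w) : ∃ e, r e = u ∧ s e = w := by
  obtain ⟨⟨e, he⟩⟩ := (Nat.card_pos_iff.mp h).1
  exact ⟨e, he⟩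

lemma vm_pos_of {u w : V} (e : E1) (h1 : r e = u) (h2 : s e = w) :
    0 < vertexMatrix r s u w :=
  @Nat.card_pos _ ⟨⟨e, h1, h2⟩⟩ _

/-- Prepend an edge to an infinite path. -/
def consPath (e : E1) (z : PathSpace r s) (h : s e = r (z.1 0)) : PathSpace r s :=
  ⟨fun i => Nat.casesOn i e fun j => z.1 j, by
    intro i
    cases i with
    | zero => exact h
    | succ j => exact z.2 j⟩

lemma shift_iter (N : ℕ) (w : PathSpace r s) (i : ℕ) :
    ((shiftMap r s)^[N] w).1 i = w.1 (i + N) := by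
  induction N generalizing w i with
  | zero => rfl
  | succ N ih =>
    rw [Function.iterate_succ_apply, ih]
    show w.1 (i + N + 1) = w.1 (i + (N + 1))
    rw [Nat.add_assoc]

/-- A vertex is good if it emits an infinite path. -/
def Good (v : V) : Prop := ∃ z : PathSpace r s, r (z.1 0) = v

lemma good_prepend : ∀ {m : ℕ} {u v : V},
    0 < (vertexMatrix r s ^ m) u v → Good r s v → Good r s u := by
  intro m
  induction m with
  | zero =>
    intro u v h hv
    rw [pow_zero] at h
    rcases eq_or_ne u v with rfl | hne
    · exact hv
    · rw [Matrix.one_apply_ne hne] at h; omega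
  | succ m ih =>
    intro u v h hv
    rw [pow_succ', Matrix.mul_apply] at h
    obtain ⟨w, -, hw⟩ := Finset.exists_ne_zero_of_sum_ne_zero h.ne'
    obtain ⟨h1, h2⟩ := Nat.mul_ne_zero_iff.mp hw
    obtain ⟨e, he1, he2⟩ := vm_pos r s (Nat.pos_of_ne_zero h1)
    obtain ⟨z, hz⟩ := ih (Nat.pos_of_ne_zero h2) hv
    exact ⟨consPath r s e z (by rw [hz, he2]), by
      show r e = u
      exact he1⟩

lemma exists_chain : ∀ {m : ℕ} {u v : V}, 0 < (vertexMatrix r s ^ m) u v →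
    ∃ f : ℕ → V, f 0 = u ∧ f m = v ∧
      ∀ j < m, 0 < vertexMatrix r s (f j) (f (j + 1)) := by
  intro m
  induction m with
  | zero =>
    intro u v h
    rw [pow_zero] at h
    rcases eq_or_ne u v with rfl | hne
    · exact ⟨fun _ => u, rfl, rfl, by omega⟩
    · rw [Matrix.one_apply_ne hne] at h; omega
  | succ m ih =>
    intro u v h
    rw [pow_succ', Matrix.mul_apply] at h
    obtain ⟨w, -, hw⟩ := Finset.exists_ne_zero_of_sum_ne_zero h.ne'
    obtain ⟨h1, h2⟩ := Nat.mul_ne_zero_iff.mp hw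
    obtain ⟨f, hf0, hfm, hf⟩ := ih (Nat.pos_of_ne_zero h2)
    refine ⟨fun i => Nat.casesOn i u fun j => f j, rfl, hfm, ?_⟩
    intro j hj
    cases j with
    | zero => simpa [hf0] using Nat.pos_of_ne_zero h1
    | succ j => exact hf j (by omega)

lemma chain_pow {m : ℕ} {f : ℕ → V}
    (hf : ∀ j < m, 0 < vertexMatrix r s (f j) (f (j + 1))) :
    ∀ (a d : ℕ), a + d ≤ m → 0 < (vertexMatrix r s ^ d) (f a) (f (a + d)) := by
  intro a d
  induction d with
  | zero => intro _; simp [Matrix.one_apply_eq]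
  | succ d ih =>
    intro hle
    rw [pow_succ, Matrix.mul_apply]
    have h1 := ih (by omega)
    have h2 := hf (a + d) (by omega)
    calc 0 < (vertexMatrix r s ^ d) (f a) (f (a + d)) *
        vertexMatrix r s (f (a + d)) (f (a + d + 1)) := Nat.mul_pos h1 h2
      _ ≤ _ := by
        have : a + (d + 1) = a + d + 1 := by omega
        rw [this]
        exact Finset.single_le_sum
          (f := fun j => (vertexMatrix r s ^ d) (f a) j *
            vertexMatrix r s j (f (a + d + 1)))
          (fun i _ => Nat.zero_le _) (Finset.mem_univ (f (a + d)))

lemma good_of_cycle {v : V} {n : ℕ} (hn : 1 ≤ n)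
    (h : 0 < (vertexMatrix r s ^ n) v v) : Good r s v := by
  classical
  set g : V → Prop := fun u => ∃ k, 1 ≤ k ∧ 0 < (vertexMatrix r s ^ k) u v with hg
  have hgv : g v := ⟨n, hn, h⟩
  have hstep : ∀ u, g u → ∃ e : E1, r e = u ∧ g (s e) := by
    rintro u ⟨k, hk, hpos⟩
    obtain ⟨k, rfl⟩ : ∃ k', k = k' + 1 := ⟨k - 1, by omega⟩
    rw [pow_succ', Matrix.mul_apply] at hpos
    obtain ⟨w, -, hw⟩ := Finset.exists_ne_zero_of_sum_ne_zero hpos.ne'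
    obtain ⟨h1, h2⟩ := Nat.mul_ne_zero_iff.mp hw
    obtain ⟨e, he1, he2⟩ := vm_pos r s (Nat.pos_of_ne_zero h1)
    refine ⟨e, he1, ?_⟩
    rcases Nat.eq_zero_or_pos k with rfl | hk'
    · have : w = v := by
        by_contra hne
        rw [pow_zero, Matrix.one_apply_ne hne] at h2
        exact h2 rfl
      rw [he2, this]; exact hgv
    · rw [he2]; exact ⟨k, hk', Nat.pos_of_ne_zero h2⟩
  choose F hF1 hF2 using hstep
  let seq : ℕ → {u : V // g u} := fun i =>
    Nat.rec ⟨v, hgv⟩ (fun _ p => ⟨s (F p.1 p.2), hF2 p.1 p.2⟩) i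
  refine ⟨⟨fun i => F (seq i).1 (seq i).2, fun i => ?_⟩, ?_⟩
  · rw [hF1 (seq (i + 1)).1 (seq (i + 1)).2]
  · exact hF1 (seq 0).1 (seq 0).2

lemma good_of_long {m : ℕ} {u v : V} (hm : Fintype.card V ≤ m)
    (h : 0 < (vertexMatrix r s ^ m) u v) : Good r s u := by
  obtain ⟨f, hf0, hfm, hf⟩ := exists_chain r s h
  have hcard : Fintype.card V < Fintype.card (Fin (m + 1)) := by
    rw [Fintype.card_fin]; omega
  obtain ⟨i, j, hne, hij⟩ :=
    Fintype.exists_ne_map_eq_of_card_lt (fun i : Fin (m + 1) => f i) hcard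
  wlog hlt : (i : ℕ) < (j : ℕ) generalizing i j
  · exact this j i hne.symm hij.symm (by omega)
  have hcyc : 0 < (vertexMatrix r s ^ ((j : ℕ) - i)) (f i) (f i) := by
    have := chain_pow r s hf i ((j : ℕ) - i) (by omega)
    rwa [show (i : ℕ) + ((j : ℕ) - i) = j by omega, ← hij] at this
  have hgood : Good r s (f i) := good_of_cycle r s (by omega) hcyc
  have hpath : 0 < (vertexMatrix r s ^ (i : ℕ)) u (f i) := by
    have := chain_pow r s hf 0 i (by omega)
    rwa [hf0, Nat.zero_add] at this
  exact good_prepend r s hpath hgood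

end Comb

section Count
set_option linter.unusedSectionVars false
variable {V E1 : Type*} [Fintype V] [Fintype E1] [DecidableEq V] (r s : E1 → V)

/-- Preimages of `z` under `σ^N` starting at a specified vertex `u`. -/
def Pre (N : ℕ) (z : PathSpace r s) (u : V) : Type _ :=
  {w : PathSpace r s // (shiftMap r s)^[N] w = z ∧ r (w.1 0) = u}

instance pre_finite (N : ℕ) (z : PathSpace r s) (u : V) : Finite (Pre r s N z u) := by
  have hinj : Function.Injective
      (fun w : Pre r s N z u => (fun i : Fin N => w.1.1 i) : Pre r s N z u → Fin N → E1) := by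
    intro w w' h
    apply Subtype.ext; apply Subtype.ext; funext i
    rcases lt_or_ge i N with hi | hi
    · exact congrFun h ⟨i, hi⟩
    · have e1 : w.1.1 i = z.1 (i - N) := by
        have h0 := shift_iter r s N w.1 (i - N)
        rw [w.2.1, Nat.sub_add_cancel hi] at h0
        exact h0.symm
      have e2 : w'.1.1 i = z.1 (i - N) := by
        have h0 := shift_iter r s N w'.1 (i - N)
        rw [w'.2.1, Nat.sub_add_cancel hi] at h0
        exact h0.symm
      rw [e1, e2]
  exact Finite.of_injective _ hinj

lemma nat_card_sigma {ι : Type*} [Fintype ι] (f : ι → Type*) [∀ i, Finite (f i)] :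
    Nat.card (Σ i, f i) = ∑ i, Nat.card (f i) := by
  letI : ∀ i, Fintype (f i) := fun i => Fintype.ofFinite (f i)
  simp [Nat.card_eq_fintype_card, Fintype.card_sigma]

/-- The structural equivalence peeling off the first edge. -/
def preEquiv (N : ℕ) (z : PathSpace r s) (u : V) :
    Pre r s (N + 1) z u ≃ Σ w : V, {e : E1 // r e = u ∧ s e = w} × Pre r s N z w where
  toFun w' :=
    ⟨s (w'.1.1 0), ⟨⟨w'.1.1 0, w'.2.2, rfl⟩,
      ⟨shiftMap r s w'.1,
        by rw [← Function.iterate_succ_apply]; exact w'.2.1,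
        (w'.1.2 0).symm⟩⟩⟩
  invFun p :=
    ⟨consPath r s p.2.1.1 p.2.2.1 (by rw [p.2.2.2.2, p.2.1.2.2]),
      by rw [Function.iterate_succ_apply]
         exact p.2.2.2.1,
      p.2.1.2.1⟩
  left_inv w' := by
    apply Subtype.ext; apply Subtype.ext; funext i
    cases i with
    | zero => rfl
    | succ j => rfl
  right_inv p := by
    rcases p with ⟨w, ⟨e, he1, he2⟩, ⟨y, hy1, hy2⟩⟩
    subst he2
    rfl

lemma card_pre (N : ℕ) (z : PathSpace r s) :
    ∀ u : V, Nat.card (Pre r s N z u) = (vertexMatrix r s ^ N) u (r (z.1 0)) := by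
  induction N with
  | zero =>
    intro u
    rw [pow_zero, Matrix.one_apply]
    split_ifs with h
    · have : Unique (Pre r s 0 z u) := by
        constructor
        case toInhabited => exact ⟨⟨z, rfl, h.symm⟩⟩
        intro w
        apply Subtype.ext
        exact w.2.1
      exact Nat.card_unique
    · have : IsEmpty (Pre r s 0 z u) := by
        constructor
        rintro ⟨w, hw1, hw2⟩
        exact h (by rw [← hw2]; exact congrArg (fun t => r (t.1 0)) hw1)
      exact Nat.card_of_isEmpty
  | succ N ih =>
    intro u
    rw [Nat.card_congr (preEquiv r s N z u), nat_card_sigma]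
    have : ∀ w : V, Nat.card ({e : E1 // r e = u ∧ s e = w} × Pre r s N z w)
        = vertexMatrix r s u w * (vertexMatrix r s ^ N) w (r (z.1 0)) := by
      intro w
      rw [Nat.card_prod, ih w]
      rfl
    simp only [this]
    rw [pow_succ', Matrix.mul_apply]

lemma card_preimage (N : ℕ) (z : PathSpace r s) :
    Nat.card ((shiftMap r s)^[N] ⁻¹' {z}) =
      ∑ u : V, (vertexMatrix r s ^ N) u (r (z.1 0)) := by
  have e : ((shiftMap r s)^[N] ⁻¹' {z}) ≃ Σ u : V, Pre r s N z u :=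
    { toFun := fun w => ⟨r (w.1.1 0), ⟨w.1, w.2, rfl⟩⟩
      invFun := fun p => ⟨p.2.1, p.2.2.1⟩
      left_inv := fun w => rfl
      right_inv := fun p => by
        rcases p with ⟨u, w, h1, h2⟩
        subst h2
        rfl }
  rw [Nat.card_congr e, nat_card_sigma]
  simp only [card_pre]

end Count

section Spectral
set_option linter.unusedSectionVars false
open scoped NNReal ENNReal Matrix

attribute [local instance] Matrix.linftyOpNormedRing Matrix.linftyOpNormedAlgebra

variable {V : Type*} [Fintype V] [DecidableEq V]

lemma spectrum_transpose (M : Matrix V V ℂ) : spectrum ℂ Mᵀ = spectrum ℂ M := by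
  ext x
  simp only [spectrum.mem_iff]
  have h : algebraMap ℂ (Matrix V V ℂ) x - Mᵀ = (algebraMap ℂ (Matrix V V ℂ) x - M)ᵀ := by
    rw [Matrix.transpose_sub]
    congr 1
    rw [Matrix.algebraMap_eq_diagonal, Matrix.diagonal_transpose]
  rw [h, Matrix.isUnit_iff_isUnit_det, Matrix.det_transpose, ← Matrix.isUnit_iff_isUnit_det]

lemma spectralRadius_transpose (M : Matrix V V ℂ) :
    spectralRadius ℂ Mᵀ = spectralRadius ℂ M := by
  simp only [spectralRadius, spectrum_transpose]

lemma specRad_pow_le [Nonempty V] (Aℕ : Matrix V V ℕ) (m : ℕ) (hm : 1 ≤ m) (b : ℕ)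
    (hb : ∀ v, ∑ u, (Aℕ ^ m) u v ≤ b) :
    specRad (Aℕ.map (Nat.cast : ℕ → ℝ)) ^ m ≤ (b : ℝ) := by
  classical
  set Ac : Matrix V V ℂ := (Aℕ.map (Nat.cast : ℕ → ℝ)).map Complex.ofReal with hAc
  have hAc' : Ac = Aℕ.map (Nat.cast : ℕ → ℂ) := by
    ext i j
    simp [hAc, Matrix.map_apply]
  have hpow : Ac ^ m = (Aℕ ^ m).map (Nat.cast : ℕ → ℂ) := by
    rw [hAc']
    have := map_pow (Nat.castRingHom ℂ).mapMatrix Aℕ m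
    simpa [RingHom.mapMatrix_apply] using this.symm
  -- norm bound on the transpose power
  have hnorm : ‖(Acᵀ) ^ m‖₊ ≤ (b : ℝ≥0) := by
    rw [← Matrix.transpose_pow, Matrix.linfty_opNNNorm_def]
    apply Finset.sup_le
    intro v _
    have : ∀ u, ‖(Ac ^ m)ᵀ v u‖₊ = ((Aℕ ^ m) u v : ℝ≥0) := by
      intro u
      rw [Matrix.transpose_apply, hpow]
      simp [Matrix.map_apply]
    rw [Finset.sum_congr rfl fun u _ => this u]
    rw [← Nat.cast_sum]
    exact_mod_cast hb v
  -- spectral radius bound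
  obtain ⟨m', rfl⟩ : ∃ m', m = m' + 1 := ⟨m - 1, by omega⟩
  have h1 := spectrum.spectralRadius_le_pow_nnnorm_pow_one_div ℂ (Acᵀ) m'
  rw [nnnorm_one, ENNReal.coe_one, ENNReal.one_rpow, mul_one] at h1
  have h2 : spectralRadius ℂ (Acᵀ) ^ (m' + 1) ≤ ((‖(Acᵀ) ^ (m' + 1)‖₊ : ℝ≥0∞)) := by
    calc spectralRadius ℂ (Acᵀ) ^ (m' + 1)
        ≤ ((‖(Acᵀ) ^ (m' + 1)‖₊ : ℝ≥0∞) ^ (1 / (m' + 1) : ℝ)) ^ (m' + 1) :=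
          pow_le_pow_left' h1 (m' + 1)
      _ = (‖(Acᵀ) ^ (m' + 1)‖₊ : ℝ≥0∞) := by
          rw [← ENNReal.rpow_natCast ((‖(Acᵀ) ^ (m' + 1)‖₊ : ℝ≥0∞) ^ (1 / (m' + 1) : ℝ)) (m' + 1),
            ← ENNReal.rpow_mul, one_div]
          have he : ((m' : ℝ) + 1)⁻¹ * ((m' + 1 : ℕ) : ℝ) = 1 := by
            push_cast
            field_simp
          rw [he, ENNReal.rpow_one]
  rw [specRad, ← hAc, ← spectralRadius_transpose Ac]
  rw [← ENNReal.toReal_pow]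
  calc (spectralRadius ℂ (Acᵀ) ^ (m' + 1)).toReal
      ≤ ((‖(Acᵀ) ^ (m' + 1)‖₊ : ℝ≥0∞)).toReal := ENNReal.toReal_mono ENNReal.coe_ne_top h2
    _ = (‖(Acᵀ) ^ (m' + 1)‖₊ : ℝ) := rfl
    _ ≤ (b : ℝ) := by exact_mod_cast hnorm

end Spectral

section Helpers
variable {V : Type*} [Fintype V] [DecidableEq V]

lemma sum_mul_apply (M P : Matrix V V ℕ) (w : V) :
    ∑ u, (M * P) u w = ∑ w', (∑ u, M u w') * P w' w := by
  simp only [Matrix.mul_apply, Finset.sum_mul]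
  exact Finset.sum_comm

lemma sum_bound (M P : Matrix V V ℕ) (w : V) (Cb : ℕ)
    (h : ∀ w', 0 < P w' w → ∑ u, M u w' ≤ Cb) :
    ∑ u, (M * P) u w ≤ Cb * ∑ w', P w' w := by
  rw [sum_mul_apply, Finset.mul_sum]
  apply Finset.sum_le_sum
  intro w' _
  rcases Nat.eq_zero_or_pos (P w' w) with h0 | hp
  · simp [h0]
  · exact Nat.mul_le_mul_right _ (h w' hp)

end Helpers

/-- For a finite directed graph with at least one cycle,
`ρ(A)^N ≤ max_{z ∈ E^∞} |σ^{-N}(z)|` for every `N ≥ 1`. -/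
theorem stmt14 {V E1 : Type*} [Fintype V] [Fintype E1] [DecidableEq V]
    (r s : E1 → V)
    (hcycle : ∃ v : V, ∃ N : ℕ, 1 ≤ N ∧ 0 < (vertexMatrix r s ^ N) v v) :
    ∀ N : ℕ, 1 ≤ N →
      specRad ((vertexMatrix r s).map (Nat.cast : ℕ → ℝ)) ^ N ≤
        ⨆ z : PathSpace r s, (Nat.card ((shiftMap r s)^[N] ⁻¹' {z}) : ℝ) := by
  classical
  obtain ⟨v₀, N₀, hN₀, hpos⟩ := hcycle
  haveI : Nonempty V := ⟨v₀⟩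
  intro N hN
  set Aℕ : Matrix V V ℕ := vertexMatrix r s with hA
  have hgood₀ : Good r s v₀ := good_of_cycle r s hN₀ hpos
  set C : ℕ := Finset.univ.sup (fun w => if Good r s w then ∑ u, (Aℕ ^ N) u w else 0) with hC
  have hCle : ∀ w, Good r s w → ∑ u, (Aℕ ^ N) u w ≤ C := by
    intro w hw
    have := Finset.le_sup (f := fun w => if Good r s w then ∑ u, (Aℕ ^ N) u w else 0)
      (Finset.mem_univ w)
    simpa only [if_pos hw] using this
  -- the diagonal entries of powers along the cycle are positive
  have hdiag : ∀ k, 0 < (Aℕ ^ (N₀ * k)) v₀ v₀ := by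
    intro k
    induction k with
    | zero => simp [Matrix.one_apply_eq]
    | succ k ih =>
      rw [Nat.mul_succ, pow_add, Matrix.mul_apply]
      calc 0 < (Aℕ ^ (N₀ * k)) v₀ v₀ * (Aℕ ^ N₀) v₀ v₀ := Nat.mul_pos ih hpos
        _ ≤ _ := Finset.single_le_sum
            (f := fun j => (Aℕ ^ (N₀ * k)) v₀ j * (Aℕ ^ N₀) j v₀)
            (fun i _ => Nat.zero_le _) (Finset.mem_univ v₀)
  have hC1 : 1 ≤ C := by
    have hm : N ≤ N₀ * N := Nat.le_mul_of_pos_left N (by omega)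
    have h := hdiag N
    rw [show N₀ * N = (N₀ * N - N) + N by omega, pow_add, Matrix.mul_apply] at h
    obtain ⟨u, -, hu⟩ := Finset.exists_ne_zero_of_sum_ne_zero h.ne'
    obtain ⟨-, h2⟩ := Nat.mul_ne_zero_iff.mp hu
    have : 1 ≤ ∑ u', (Aℕ ^ N) u' v₀ := by
      calc 1 ≤ (Aℕ ^ N) u v₀ := Nat.pos_of_ne_zero h2
        _ ≤ _ := Finset.single_le_sum (f := fun u' => (Aℕ ^ N) u' v₀)
            (fun i _ => Nat.zero_le _) (Finset.mem_univ u)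
    exact this.trans (hCle v₀ hgood₀)
  -- column sums at good vertices of powers of A^N are bounded by powers of C
  have hgoodsum : ∀ k, ∀ w, Good r s w → ∑ u, (Aℕ ^ (N * k)) u w ≤ C ^ k := by
    intro k
    induction k with
    | zero => intro w _; simp [Matrix.one_apply]
    | succ k ih =>
      intro w hw
      rw [Nat.mul_succ, pow_add]
      calc ∑ u, (Aℕ ^ (N * k) * Aℕ ^ N) u w
          ≤ C ^ k * ∑ w', (Aℕ ^ N) w' w := by
            apply sum_bound
            intro w' hp
            exact ih w' (good_prepend r s hp hw)
        _ ≤ C ^ k * C := Nat.mul_le_mul_left _ (hCle w hw)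
        _ = C ^ (k + 1) := (pow_succ C k).symm
  set c : ℕ := Fintype.card V with hc
  have hcpos : 1 ≤ c := Fintype.card_pos
  set D : ℕ := Finset.univ.sup (fun v => ∑ w, (Aℕ ^ c) w v) with hD
  have hall : ∀ k v, ∑ u, (Aℕ ^ (N * k + c)) u v ≤ C ^ k * D := by
    intro k v
    rw [pow_add]
    calc ∑ u, (Aℕ ^ (N * k) * Aℕ ^ c) u v
        ≤ C ^ k * ∑ w', (Aℕ ^ c) w' v := by
          apply sum_bound
          intro w' hp
          exact hgoodsum k w' (good_of_long r s le_rfl hp)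
      _ ≤ C ^ k * D := Nat.mul_le_mul_left _
          (Finset.le_sup (f := fun v => ∑ w, (Aℕ ^ c) w v) (Finset.mem_univ v))
  set ρ : ℝ := specRad (Aℕ.map (Nat.cast : ℕ → ℝ)) with hρdef
  have hρ : ∀ k, ρ ^ (N * k + c) ≤ ((C ^ k * D : ℕ) : ℝ) := by
    intro k
    exact specRad_pow_le Aℕ (N * k + c) (by omega) _ (hall k)
  have hρ0 : 0 ≤ ρ := ENNReal.toReal_nonneg
  have hkey : ρ ^ N ≤ (C : ℝ) := by
    by_contra hlt
    push_neg at hlt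
    have hCpos : (0 : ℝ) < C := by exact_mod_cast hC1
    have hρpos : 0 < ρ := by
      rcases hρ0.lt_or_eq with h | h
      · exact h
      · exfalso
        rw [← h, zero_pow (by omega)] at hlt
        linarith
    have ht : 1 < ρ ^ N / C := (one_lt_div hCpos).2 hlt
    obtain ⟨k, hk⟩ := pow_unbounded_of_one_lt ((D : ℝ) / ρ ^ c) ht
    have h3 : (ρ ^ N / (C : ℝ)) ^ k ≤ (D : ℝ) / ρ ^ c := by
      rw [div_pow, div_le_div_iff₀ (by positivity) (by positivity)]
      calc (ρ ^ N) ^ k * ρ ^ c = ρ ^ (N * k + c) := by rw [← pow_mul, ← pow_add]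
        _ ≤ ((C ^ k * D : ℕ) : ℝ) := hρ k
        _ = (D : ℝ) * (C : ℝ) ^ k := by push_cast; ring
    linarith
  -- a good vertex attaining the max
  obtain ⟨w₁, hw₁good, hw₁⟩ : ∃ w, Good r s w ∧ C ≤ ∑ u, (Aℕ ^ N) u w := by
    obtain ⟨w₁, -, hw₁eq⟩ := Finset.exists_mem_eq_sup Finset.univ Finset.univ_nonempty
      (fun w => if Good r s w then ∑ u, (Aℕ ^ N) u w else 0)
    by_cases hg : Good r s w₁
    · exact ⟨w₁, hg, by rw [hC, hw₁eq, if_pos hg]⟩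
    · exact ⟨v₀, hgood₀, by rw [hC, hw₁eq, if_neg hg]; exact Nat.zero_le _⟩
  obtain ⟨z₁, hz₁⟩ := hw₁good
  have hbdd : BddAbove (Set.range fun z : PathSpace r s =>
      (Nat.card ((shiftMap r s)^[N] ⁻¹' {z}) : ℝ)) := by
    refine ⟨((∑ v, ∑ u, (Aℕ ^ N) u v : ℕ) : ℝ), ?_⟩
    rintro x ⟨z, rfl⟩
    simp only
    rw [card_preimage]
    exact_mod_cast Finset.single_le_sum (f := fun v => ∑ u, (Aℕ ^ N) u v)
      (fun _ _ => Nat.zero_le _) (Finset.mem_univ (r (z.1 0)))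
  calc ρ ^ N ≤ (C : ℝ) := hkey
    _ ≤ ((∑ u, (Aℕ ^ N) u w₁ : ℕ) : ℝ) := by exact_mod_cast hw₁
    _ = (Nat.card ((shiftMap r s)^[N] ⁻¹' {z₁}) : ℝ) := by rw [card_preimage, hz₁]
    _ ≤ _ := le_ciSup hbdd z₁
end
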